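/- arXiv:1211.3868 — 2 statements merged into one kernel-verified Lean document; each statement's English description precedes it below -/
import Mathlib

section
/- With X^c defined as in the construction (piecewise running supremum minus c, alternating with running infimum plus c), for every s > 0 the jump of X^c at s is bounded by the jump of X at s: |X^c(s) − X^c(s−)| ≤ |X(s) − X(s−)|. -/
open Set Filter MeasureTheory
open scoped ENNReal NNReal Topology

noncomputable section

/-- A function is càdlàg: right-continuous with left limits. -/
def Cadlag (f : ℝ → ℝ) : Prop :=
  (∀ t : ℝ, Tendsto f (nhdsWithin t (Ici t)) (nhds (f t))) ∧
  (∀ t : ℝ, ∃ l : ℝ, Tendsto f (nhdsWithin t (Iio t)) (nhds l))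

/-- Jump of `f` at `s`. -/
def jumpAt (f : ℝ → ℝ) (s : ℝ) : ℝ := f s - Function.leftLim f s

def supOn (f : ℝ → ℝ) (a b : ℝ) : ℝ := sSup (f '' Icc a b)
def infOn (f : ℝ → ℝ) (a b : ℝ) : ℝ := sInf (f '' Icc a b)

def TuZero (X : ℝ → ℝ) (c : ℝ) : ℝ≥0∞ :=
  sInf {u | ∃ s : ℝ, 0 ≤ s ∧ u = ENNReal.ofReal s ∧ supOn X 0 s - X 0 > c}

def TdIni (X : ℝ → ℝ) (c : ℝ) : ℝ≥0∞ :=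
  sInf {u | ∃ s : ℝ, 0 ≤ s ∧ u = ENNReal.ofReal s ∧ X 0 - infOn X 0 s > c}

def nextTd (X : ℝ → ℝ) (c : ℝ) (a : ℝ≥0∞) : ℝ≥0∞ :=
  sInf {u | ∃ s : ℝ, 0 ≤ s ∧ a ≤ ENNReal.ofReal s ∧ u = ENNReal.ofReal s ∧
    supOn X a.toReal s - X s > 2 * c}

def nextTu (X : ℝ → ℝ) (c : ℝ) (a : ℝ≥0∞) : ℝ≥0∞ :=
  sInf {u | ∃ s : ℝ, 0 ≤ s ∧ a ≤ ENNReal.ofReal s ∧ u = ENNReal.ofReal s ∧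
    X s - infOn X a.toReal s > 2 * c}

def TuTd (X : ℝ → ℝ) (c : ℝ) : ℕ → ℝ≥0∞ × ℝ≥0∞
  | 0 => (TuZero X c, nextTd X c (TuZero X c))
  | (n + 1) =>
      let tu := nextTu X c (TuTd X c n).2
      (tu, nextTd X c tu)

def Tu (X : ℝ → ℝ) (c : ℝ) (n : ℕ) : ℝ≥0∞ := (TuTd X c n).1
def Td (X : ℝ → ℝ) (c : ℝ) (n : ℕ) : ℝ≥0∞ := (TuTd X c n).2

open Classical in
/-- The finite variation approximation `X^c` from the paper's construction. -/
def Xc (X : ℝ → ℝ) (c : ℝ) (s : ℝ) : ℝ :=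
  if ENNReal.ofReal s < Tu X c 0 then X 0
  else if h : ∃ k, Tu X c k ≤ ENNReal.ofReal s ∧ ENNReal.ofReal s < Td X c k then
    supOn X (Tu X c (Nat.find h)).toReal s - c
  else if h' : ∃ k, Td X c k ≤ ENNReal.ofReal s ∧ ENNReal.ofReal s < Tu X c (k + 1) then
    infOn X (Td X c (Nat.find h')).toReal s + c
  else 0

/-- Truncated variation at level `c` on `[0, T]`. -/
def TVtrunc (f : ℝ → ℝ) (c T : ℝ) : ℝ≥0∞ :=
  ⨆ (n : ℕ) (t : ℕ → ℝ) (_ : Monotone t) (_ : ∀ i, t i ∈ Icc (0 : ℝ) T),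
    ∑ i ∈ Finset.range n, ENNReal.ofReal (|f (t (i + 1)) - f (t i)| - c)

/-- Upward truncated variation at level `c` on `[0, T]`. -/
def UTVtrunc (f : ℝ → ℝ) (c T : ℝ) : ℝ≥0∞ :=
  ⨆ (n : ℕ) (t : ℕ → ℝ) (_ : Monotone t) (_ : ∀ i, t i ∈ Icc (0 : ℝ) T),
    ∑ i ∈ Finset.range n, ENNReal.ofReal (f (t (i + 1)) - f (t i) - c)

/-- Downward truncated variation at level `c` on `[0, T]`. -/
def DTVtrunc (f : ℝ → ℝ) (c T : ℝ) : ℝ≥0∞ :=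
  ⨆ (n : ℕ) (t : ℕ → ℝ) (_ : Monotone t) (_ : ∀ i, t i ∈ Icc (0 : ℝ) T),
    ∑ i ∈ Finset.range n, ENNReal.ofReal (f (t i) - f (t (i + 1)) - c)

/-- Left-endpoint Riemann–Stieltjes sum of `f` against `g` over the dyadic
partition of `[0, t]` with `2 ^ n` pieces. -/
def RSsum (f g : ℝ → ℝ) (t : ℝ) (n : ℕ) : ℝ :=
  ∑ i ∈ Finset.range (2 ^ n),
    f (t * i / 2 ^ n) * (g (t * (i + 1) / 2 ^ n) - g (t * i / 2 ^ n))

/-- Pathwise Lebesgue–Stieltjes integral `∫_0^t f_- dg`, realized as the limit of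
left-endpoint Riemann–Stieltjes sums along dyadic partitions. -/
def LSint (f g : ℝ → ℝ) (t : ℝ) : ℝ := limUnder atTop (fun n => RSsum f g t n)

/-- Discrete covariation sums along dyadic partitions. -/
def QVsum (f g : ℝ → ℝ) (t : ℝ) (n : ℕ) : ℝ :=
  ∑ i ∈ Finset.range (2 ^ n),
    (f (t * (i + 1) / 2 ^ n) - f (t * i / 2 ^ n)) *
      (g (t * (i + 1) / 2 ^ n) - g (t * i / 2 ^ n))

/-- Sum of products of jumps `∑_{0 < s ≤ t} Δf Δg`. -/
def jumpSum (f g : ℝ → ℝ) (t : ℝ) : ℝ :=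
  ∑' s : ℝ, Set.indicator (Ioc (0 : ℝ) t) (fun u => jumpAt f u * jumpAt g u) s

/-- A local martingale: there is a localizing sequence of stopping times. -/
def IsLocalMartingale {Ω : Type*} [m : MeasurableSpace Ω] (F : Filtration ℝ m)
    (P : Measure Ω) (M : ℝ → Ω → ℝ) : Prop :=
  ∃ τ : ℕ → Ω → ℝ, (∀ n, IsStoppingTime F (fun ω => (τ n ω : WithTop ℝ))) ∧
    (∀ ω, Tendsto (fun n => τ n ω) atTop atTop) ∧
    ∀ n, Martingale (stoppedProcess M (fun ω => (τ n ω : WithTop ℝ))) F P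

/-- A (càdlàg) semimartingale: adapted, càdlàg, and decomposable as a local
martingale plus an adapted càdlàg process of locally finite variation. -/
def IsSemimartingale {Ω : Type*} [m : MeasurableSpace Ω] (F : Filtration ℝ m)
    (P : Measure Ω) (X : ℝ → Ω → ℝ) : Prop :=
  Adapted F X ∧ (∀ ω, Cadlag fun t => X t ω) ∧
  ∃ M A : ℝ → Ω → ℝ, (∀ t ω, X t ω = M t ω + A t ω) ∧
    IsLocalMartingale F P M ∧ Adapted F A ∧ (∀ ω, Cadlag fun t => A t ω) ∧
    (∀ ω, ∀ T > (0 : ℝ), eVariationOn (fun t => A t ω) (Icc 0 T) < ⊤)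

/-- The filtration satisfies the usual hypotheses w.r.t. `P`:
right-continuity and completeness. -/
def UsualConditions {Ω : Type*} [m : MeasurableSpace Ω] (F : Filtration ℝ m)
    (P : Measure Ω) : Prop :=
  (∀ t : ℝ, F t = ⨅ (s : ℝ) (_ : t < s), F s) ∧
  (∀ t : ℝ, ∀ s : Set Ω, P s = 0 → MeasurableSet[F t] s)

/-- Uniform convergence on compacts in probability, as `c ↓ 0`. -/
def UCP {Ω : Type*} [m : MeasurableSpace Ω] (P : Measure Ω)
    (Fc : ℝ → ℝ → Ω → ℝ) (G : ℝ → Ω → ℝ) : Prop :=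
  ∀ T > (0 : ℝ), ∀ ε > (0 : ℝ),
    Tendsto (fun c => P {ω | ε ≤ ⨆ t : Icc (0 : ℝ) T, |Fc c t ω - G t ω|})
      (nhdsWithin 0 (Ioi 0)) (nhds 0)

/-- Standard Brownian motion started at `0`. -/
def IsStandardBM {Ω : Type*} [m : MeasurableSpace Ω] (P : Measure Ω)
    (B : ℝ → Ω → ℝ) : Prop :=
  (∀ ω, B 0 ω = 0) ∧ (∀ ω, Continuous fun t => B t ω) ∧
  (∀ t, Measurable (B t)) ∧
  (∀ s t : ℝ, 0 ≤ s → s ≤ t →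
    P.map (fun ω => B t ω - B s ω) = ProbabilityTheory.gaussianReal 0 ((t - s).toNNReal)) ∧
  (∀ n : ℕ, ∀ t : Fin (n + 1) → ℝ, Monotone t → (∀ i, 0 ≤ t i) →
    ProbabilityTheory.iIndepFun
      (fun (i : Fin n) ω => B (t i.succ) ω - B (t i.castSucc) ω) P)

/-- Natural σ-algebra of the process `B` up to time `t`. -/
def naturalSigma {Ω : Type*} (B : ℝ → Ω → ℝ) (t : ℝ) : MeasurableSpace Ω :=
  ⨆ s ∈ Iic t, MeasurableSpace.comap (B s) inferInstance

/-!
Between consecutive switching times `X^c` is a running supremum minus `c` (or a running infimum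
plus `c`), whose jump at `s` is `(X s - sup_{[a,s)} X)⁺`, at most the jump of `X`. At a switch
from an up to a down phase at time `s`, the drop `sup_{[a,s)} X - X s ≥ 2c` has just been
reached while `sup_{[a,t]} X - X t ≤ 2c` held for `t < s`; hence
`|ΔX^c(s)| = sup_{[a,s)} X - X s - 2c ≤ X(s-) - X s`. Switches the other way are the same
statement for `-X`, and the first switch is handled alike. Since the switching times cannot
accumulate (`X` has left limits), every `s > 0` falls into one of these cases.
-/

open Function

lemma jumpAt_neg (f : ℝ → ℝ) (s : ℝ) : jumpAt (-f) s = -jumpAt f s := by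
  by_cases h : ∃ y, Tendsto f (𝓝[<] s) (𝓝 y)
  · obtain ⟨y, hy⟩ := h
    rw [jumpAt, jumpAt, leftLim_eq_of_tendsto hy, leftLim_eq_of_tendsto (f := -f) hy.neg,
      Pi.neg_apply]
    ring
  · have h' : ¬∃ y, Tendsto (-f) (𝓝[<] s) (𝓝 y) :=
      fun ⟨y, hy⟩ => h ⟨-y, by simpa using hy.neg⟩
    simp [jumpAt, leftLim_eq_of_not_tendsto _ h, leftLim_eq_of_not_tendsto _ h']

lemma leftLim_eq_of_eventuallyEq {f g : ℝ → ℝ} {s L : ℝ} (hfg : f =ᶠ[𝓝[<] s] g)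
    (hg : Tendsto g (𝓝[<] s) (𝓝 L)) : leftLim f s = L :=
  leftLim_eq_of_tendsto (hg.congr' hfg.symm)

lemma supOn_self (X : ℝ → ℝ) (t : ℝ) : supOn X t t = X t := by
  simp [supOn]

lemma infOn_eq_neg_supOn_neg (X : ℝ → ℝ) (a b : ℝ) : infOn X a b = -supOn (-X) a b := by
  rw [infOn, supOn, Real.sInf_def, ← image_neg_eq_neg, image_image]
  rfl

namespace Cadlag

variable {X : ℝ → ℝ}

lemma neg (hX : Cadlag X) : Cadlag (-X) :=
  ⟨fun t => (hX.1 t).neg, fun t => (hX.2 t).elim fun l hl => ⟨-l, hl.neg⟩⟩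

lemma tendsto_leftLim (hX : Cadlag X) (s : ℝ) : Tendsto X (𝓝[<] s) (𝓝 (leftLim X s)) := by
  obtain ⟨l, hl⟩ := hX.2 s
  rwa [leftLim_eq_of_tendsto hl]

lemma bddAbove_image_Icc (hX : Cadlag X) (a b : ℝ) : BddAbove (X '' Icc a b) := by
  refine isCompact_Icc.induction_on (p := fun s => BddAbove (X '' s)) (by simp)
    (fun s t hst ht => ht.mono (image_mono hst))
    (fun s t hs ht => by simpa only [image_union, bddAbove_union] using And.intro hs ht) ?_
  intro x _
  obtain ⟨l, hl⟩ := hX.2 x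
  have hbound : ∀ᶠ t in 𝓝 x, X t ≤ max (l + 1) (X x + 1) := by
    rw [← nhdsLT_sup_nhdsGE x, eventually_sup]
    exact ⟨(hl.eventually (eventually_le_nhds (lt_add_one l))).mono
        fun t ht => ht.trans (le_max_left _ _),
      ((hX.1 x).eventually (eventually_le_nhds (lt_add_one _))).mono
        fun t ht => ht.trans (le_max_right _ _)⟩
  exact ⟨_, mem_nhdsWithin_of_mem_nhds hbound, _, forall_mem_image.2 fun t ht => ht⟩

lemma bddAbove_image_Ico (hX : Cadlag X) (a b : ℝ) : BddAbove (X '' Ico a b) :=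
  (hX.bddAbove_image_Icc a b).mono (image_mono Ico_subset_Icc_self)

lemma le_supOn (hX : Cadlag X) {a b t : ℝ} (ht : t ∈ Icc a b) : X t ≤ supOn X a b :=
  le_csSup (hX.bddAbove_image_Icc a b) (mem_image_of_mem X ht)

lemma supOn_eq_max (hX : Cadlag X) {a t u : ℝ} (hat : a < t) (htu : t ≤ u) :
    supOn X a u = max (sSup (X '' Ico a t)) (supOn X t u) := by
  rw [supOn, supOn, ← Ico_union_Icc_eq_Icc hat.le htu, image_union,
    csSup_union (hX.bddAbove_image_Ico a t) ((nonempty_Ico.2 hat).image X)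
      (hX.bddAbove_image_Icc t u) ((nonempty_Icc.2 htu).image X)]

lemma tendsto_supOn_nhdsLT (hX : Cadlag X) {a s : ℝ} (has : a < s) :
    Tendsto (supOn X a) (𝓝[<] s) (𝓝 (sSup (X '' Ico a s))) := by
  rw [tendsto_order]
  refine ⟨fun b hb => ?_, fun b hb => ?_⟩
  · obtain ⟨_, ⟨v, hv, rfl⟩, hbv⟩ := exists_lt_of_lt_csSup ((nonempty_Ico.2 has).image X) hb
    filter_upwards [Ioo_mem_nhdsLT hv.2] with u hu
    exact hbv.trans_le (hX.le_supOn ⟨hv.1, hu.1.le⟩)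
  · filter_upwards [Ioo_mem_nhdsLT has] with u hu
    refine lt_of_le_of_lt (csSup_le_csSup (hX.bddAbove_image_Ico a s)
      ((nonempty_Icc.2 hu.1.le).image X) (image_mono ?_)) hb
    exact fun v hv => ⟨hv.1, hv.2.trans_lt hu.2⟩

lemma tendsto_supOn_nhdsGE (hX : Cadlag X) (t : ℝ) :
    Tendsto (supOn X t) (𝓝[≥] t) (𝓝 (X t)) := by
  rw [tendsto_order]
  refine ⟨fun b hb => ?_, fun b hb => ?_⟩
  · filter_upwards [self_mem_nhdsWithin] with u hu
    exact hb.trans_le (hX.le_supOn ⟨le_rfl, hu⟩)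
  · obtain ⟨b', hb', hb'b⟩ := exists_between hb
    obtain ⟨u₀, hu₀, hsub⟩ :=
      mem_nhdsGE_iff_exists_Ico_subset.1 ((hX.1 t).eventually (eventually_lt_nhds hb'))
    filter_upwards [Ico_mem_nhdsGE hu₀] with u hu
    refine lt_of_le_of_lt (csSup_le ((nonempty_Icc.2 hu.1).image X) ?_) hb'b
    exact forall_mem_image.2 fun v hv => (hsub ⟨hv.1, hv.2.trans_lt hu.2⟩).le

lemma abs_jumpAt_le_of_eventuallyEq_supOn (hX : Cadlag X) {f : ℝ → ℝ} {a s c : ℝ}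
    (has : a < s) (hf : f =ᶠ[𝓝[<] s] fun t => supOn X a t - c)
    (hfs : f s = supOn X a s - c) : |jumpAt f s| ≤ |jumpAt X s| := by
  set S := sSup (X '' Ico a s)
  have hlim : leftLim f s = S - c :=
    leftLim_eq_of_eventuallyEq hf ((hX.tendsto_supOn_nhdsLT has).sub_const c)
  have hXS : leftLim X s ≤ S := by
    refine le_of_tendsto (hX.tendsto_leftLim s) ?_
    filter_upwards [Ioo_mem_nhdsLT has] with t ht
    exact le_csSup (hX.bddAbove_image_Ico a s) ⟨t, ⟨ht.1.le, ht.2⟩, rfl⟩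
  have hsplit : supOn X a s = max S (X s) := by rw [hX.supOn_eq_max has le_rfl, supOn_self]
  rw [jumpAt, jumpAt, hfs, hlim, hsplit]
  rcases le_total (X s) S with h | h
  · rw [max_eq_left h, sub_self, abs_zero]
    exact abs_nonneg _
  · rw [max_eq_right h, abs_of_nonneg (by linarith), abs_of_nonneg (by linarith)]
    linarith

end Cadlag

def firstTimeFrom (a : ℝ≥0∞) (P : ℝ → Prop) : ℝ≥0∞ :=
  sInf {u | ∃ s : ℝ, 0 ≤ s ∧ a ≤ ENNReal.ofReal s ∧ u = ENNReal.ofReal s ∧ P s}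

section FirstTime

variable {a : ℝ≥0∞} {P : ℝ → Prop}

lemma le_firstTimeFrom : a ≤ firstTimeFrom a P :=
  le_sInf (by rintro _ ⟨s, -, has, rfl, -⟩; exact has)

lemma not_of_lt_firstTimeFrom {t : ℝ} (ht : 0 ≤ t) (hat : a ≤ ENNReal.ofReal t)
    (htT : ENNReal.ofReal t < firstTimeFrom a P) : ¬P t :=
  fun hP => htT.not_ge (sInf_le ⟨t, ht, hat, rfl, hP⟩)

lemma frequently_nhdsGE_firstTimeFrom (hT : firstTimeFrom a P ≠ ⊤) :
    ∃ᶠ t in 𝓝[≥] (firstTimeFrom a P).toReal, P t := by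
  rw [(nhdsGE_basis _).frequently_iff]
  intro u hu
  obtain ⟨_, ⟨s, hs, has, rfl, hPs⟩, hsu⟩ :=
    sInf_lt_iff.1 ((ENNReal.lt_ofReal_iff_toReal_lt hT).2 hu)
  refine ⟨s, ⟨ENNReal.toReal_le_of_le_ofReal hs (sInf_le ⟨s, hs, has, rfl, hPs⟩), ?_⟩, hPs⟩
  exact (ENNReal.ofReal_lt_ofReal_iff'.1 hsu).1

lemma lt_firstTimeFrom (ha : a ≠ ⊤) (h : ∀ᶠ t in 𝓝[≥] a.toReal, ¬P t) :
    a < firstTimeFrom a P := by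
  refine le_firstTimeFrom.lt_of_ne fun haT => ?_
  have hfreq := frequently_nhdsGE_firstTimeFrom (haT ▸ ha)
  rw [← haT] at hfreq
  exact hfreq h

end FirstTime

lemma nextTd_eq_firstTimeFrom (X : ℝ → ℝ) (c : ℝ) (a : ℝ≥0∞) :
    nextTd X c a = firstTimeFrom a fun s => 2 * c < supOn X a.toReal s - X s :=
  rfl

lemma nextTu_eq_nextTd_neg (X : ℝ → ℝ) (c : ℝ) (a : ℝ≥0∞) :
    nextTu X c a = nextTd (-X) c a := by
  simp only [nextTu, nextTd, infOn_eq_neg_supOn_neg, Pi.neg_apply, sub_neg_eq_add, add_comm]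

lemma TuZero_eq_firstTimeFrom (X : ℝ → ℝ) (c : ℝ) :
    TuZero X c = firstTimeFrom 0 fun s => c < supOn X 0 s - X 0 := by
  simp only [TuZero, firstTimeFrom, zero_le, true_and, gt_iff_lt]

namespace Cadlag

variable {X : ℝ → ℝ} {c : ℝ} {a : ℝ≥0∞}

lemma lt_nextTd (hX : Cadlag X) (hc : 0 < c) (ha : a ≠ ⊤) : a < nextTd X c a := by
  have hlim : Tendsto (fun s => supOn X a.toReal s - X s) (𝓝[≥] a.toReal) (𝓝 0) := by
    simpa using (hX.tendsto_supOn_nhdsGE a.toReal).sub (hX.1 a.toReal)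
  refine lt_firstTimeFrom ha ?_
  filter_upwards [hlim.eventually (eventually_lt_nhds (by positivity : (0 : ℝ) < 2 * c))]
    with s hs using hs.not_gt

lemma supOn_sub_le_of_lt_nextTd {t : ℝ} (hat : a < ENNReal.ofReal t)
    (htT : ENNReal.ofReal t < nextTd X c a) : supOn X a.toReal t - X t ≤ 2 * c := by
  rw [nextTd_eq_firstTimeFrom] at htT
  exact not_lt.1 <| not_of_lt_firstTimeFrom (P := fun s => 2 * c < supOn X a.toReal s - X s)
    (ENNReal.ofReal_pos.1 (hat.trans_le' zero_le)).le hat.le htT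

lemma two_mul_le_sSup_sub_nextTd (hX : Cadlag X) (hc : 0 < c) (ha : a ≠ ⊤)
    (hT : nextTd X c a ≠ ⊤) :
    2 * c ≤ sSup (X '' Ico a.toReal (nextTd X c a).toReal) - X (nextTd X c a).toReal := by
  set t := (nextTd X c a).toReal
  set S := sSup (X '' Ico a.toReal t)
  have hat : a.toReal < t := ENNReal.toReal_strict_mono hT (hX.lt_nextTd hc ha)
  have hfreq : ∃ᶠ u in 𝓝[≥] t, max S (supOn X t u) - X u ∈ Ici (2 * c) := by
    rw [nextTd_eq_firstTimeFrom] at hT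
    refine ((frequently_nhdsGE_firstTimeFrom hT).and_eventually self_mem_nhdsWithin).mono ?_
    rintro u ⟨hP, htu⟩
    rw [mem_Ici, ← hX.supOn_eq_max hat htu]
    exact hP.le
  have hlim : Tendsto (fun u => max S (supOn X t u) - X u) (𝓝[≥] t) (𝓝 (max S (X t) - X t)) :=
    (tendsto_const_nhds.max (hX.tendsto_supOn_nhdsGE t)).sub (hX.1 t)
  have hdrop : 2 * c ≤ max S (X t) - X t := isClosed_Ici.mem_of_frequently_of_tendsto hfreq hlim
  rcases le_total S (X t) with h | h
  · rw [max_eq_right h] at hdrop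
    linarith
  · rwa [max_eq_left h] at hdrop

lemma le_add_of_lt_TuZero (hX : Cadlag X) {t : ℝ} (ht : 0 ≤ t)
    (htT : ENNReal.ofReal t < TuZero X c) : X t ≤ X 0 + c := by
  rw [TuZero_eq_firstTimeFrom] at htT
  have := not_of_lt_firstTimeFrom ht zero_le htT
  linarith [not_lt.1 this, hX.le_supOn ⟨ht, le_rfl⟩]

lemma add_le_apply_TuZero (hX : Cadlag X) (hT : TuZero X c ≠ ⊤) (ht : 0 < (TuZero X c).toReal) :
    X 0 + c ≤ X (TuZero X c).toReal := by
  have hP := frequently_nhdsGE_firstTimeFrom (by rwa [TuZero_eq_firstTimeFrom] at hT)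
  rw [← TuZero_eq_firstTimeFrom] at hP
  set t := (TuZero X c).toReal
  have hS : sSup (X '' Ico 0 t) ≤ X 0 + c := by
    refine csSup_le ((nonempty_Ico.2 ht).image X) (forall_mem_image.2 fun v hv => ?_)
    refine hX.le_add_of_lt_TuZero hv.1 ?_
    rw [← ENNReal.ofReal_toReal hT]
    exact (ENNReal.ofReal_lt_ofReal_iff ht).2 hv.2
  have hfreq : ∃ᶠ u in 𝓝[≥] t, supOn X t u ∈ Ici (X 0 + c) := by
    refine (hP.and_eventually self_mem_nhdsWithin).mono ?_
    rintro u ⟨hP, htu⟩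
    rw [hX.supOn_eq_max ht htu, lt_sub_iff_add_lt', lt_max_iff] at hP
    exact hP.resolve_left hS.not_gt |>.le
  exact isClosed_Ici.mem_of_frequently_of_tendsto hfreq (hX.tendsto_supOn_nhdsGE t)

end Cadlag

section Times

variable (X : ℝ → ℝ) (c : ℝ)

lemma Td_eq_nextTd (k : ℕ) : Td X c k = nextTd X c (Tu X c k) := by
  cases k <;> rfl

lemma Tu_succ_eq_nextTd_neg (k : ℕ) : Tu X c (k + 1) = nextTd (-X) c (Td X c k) :=
  nextTu_eq_nextTd_neg X c _

lemma Tu_le_Td (k : ℕ) : Tu X c k ≤ Td X c k :=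
  (Td_eq_nextTd X c k).symm ▸ le_firstTimeFrom

lemma Td_le_Tu_succ (k : ℕ) : Td X c k ≤ Tu X c (k + 1) :=
  (Tu_succ_eq_nextTd_neg X c k).symm ▸ le_firstTimeFrom

lemma Tu_mono : Monotone (Tu X c) :=
  monotone_nat_of_le_succ fun k => (Tu_le_Td X c k).trans (Td_le_Tu_succ X c k)

lemma Td_mono : Monotone (Td X c) :=
  monotone_nat_of_le_succ fun k => (Td_le_Tu_succ X c k).trans (Tu_le_Td X c (k + 1))

end Times

namespace Cadlag

variable {X : ℝ → ℝ} {c : ℝ}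

lemma Tu_lt_Td (hX : Cadlag X) (hc : 0 < c) {k : ℕ} (h : Tu X c k ≠ ⊤) :
    Tu X c k < Td X c k :=
  (Td_eq_nextTd X c k).symm ▸ hX.lt_nextTd hc h

lemma Td_lt_Tu_succ (hX : Cadlag X) (hc : 0 < c) {k : ℕ} (h : Td X c k ≠ ⊤) :
    Td X c k < Tu X c (k + 1) :=
  (Tu_succ_eq_nextTd_neg X c k).symm ▸ hX.neg.lt_nextTd hc h

/-- The switching times do not accumulate: near an accumulation point every up phase would
contain a drop of `X` by more than `c`, against the existence of a left limit. -/
lemma exists_lt_Td (hX : Cadlag X) (hc : 0 < c) (b : ℝ) : ∃ k, ENNReal.ofReal b < Td X c k := by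
  by_contra! hbound
  have hTd : ∀ k, Td X c k ≠ ⊤ := fun k => ne_top_of_le_ne_top ENNReal.ofReal_ne_top (hbound k)
  have hTu : ∀ k, Tu X c k ≠ ⊤ := fun k => ne_top_of_le_ne_top (hTd k) (Tu_le_Td X c k)
  set u := fun k => (Tu X c k).toReal
  set d := fun k => (Td X c k).toReal
  have hud : ∀ k, u k < d k := fun k =>
    ENNReal.toReal_strict_mono (hTd k) (hX.Tu_lt_Td hc (hTu k))
  have hdu : ∀ k, d k < u (k + 1) := fun k =>
    ENNReal.toReal_strict_mono (hTu _) (hX.Td_lt_Tu_succ hc (hTd k))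
  have hd : StrictMono d := strictMono_nat_of_lt_succ fun k => (hdu k).trans (hud (k + 1))
  have hbdd : BddAbove (range d) := ⟨(ENNReal.ofReal b).toReal,
    forall_mem_range.2 fun k => ENNReal.toReal_mono ENNReal.ofReal_ne_top (hbound k)⟩
  set L := ⨆ k, d k
  have hdL : ∀ k, d k < L := fun k => (hd k.lt_succ_self).trans_le (le_ciSup hbdd _)
  obtain ⟨l, hl⟩ := hX.2 L
  obtain ⟨m, hmL, hsub⟩ :=
    mem_nhdsLT_iff_exists_Ioo_subset.1 (hl.eventually (Metric.ball_mem_nhds l (half_pos hc)))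
  obtain ⟨k, hmk⟩ := ((tendsto_atTop_ciSup hd.monotone hbdd).eventually (lt_mem_nhds hmL)).exists
  have hdrop : 2 * c ≤ sSup (X '' Ico (u (k + 1)) (d (k + 1))) - X (d (k + 1)) := by
    have := hX.two_mul_le_sSup_sub_nextTd hc (hTu (k + 1))
      ((Td_eq_nextTd X c (k + 1)) ▸ hTd (k + 1))
    rwa [← Td_eq_nextTd] at this
  obtain ⟨_, ⟨v, hv, rfl⟩, hvS⟩ :=
    exists_lt_of_lt_csSup ((nonempty_Ico.2 (hud (k + 1))).image X) (sub_lt_self _ hc)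
  have hXv := hsub ⟨hmk.trans ((hdu k).trans_le hv.1), hv.2.trans (hdL _)⟩
  have hXd := hsub ⟨hmk.trans (hd (Nat.lt_add_one k)), hdL (k + 1)⟩
  simp only [mem_ofPred_eq, Real.dist_eq] at hXv hXd
  linarith [(abs_lt.1 hXv).2, (abs_lt.1 hXd).1]

end Cadlag

lemma eventually_nhdsLT_ofReal_mem_Ioo {a b : ℝ≥0∞} {s : ℝ} (ha : a < ENNReal.ofReal s)
    (hb : ENNReal.ofReal s ≤ b) : ∀ᶠ t in 𝓝[<] s, a < ENNReal.ofReal t ∧ ENNReal.ofReal t < b := by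
  have hs : 0 < s := ENNReal.ofReal_pos.1 (ha.trans_le' zero_le)
  filter_upwards [nhdsWithin_le_nhds ((ENNReal.continuous_ofReal.tendsto s).eventually
    (lt_mem_nhds ha)), self_mem_nhdsWithin] with t hat hts
  exact ⟨hat, ((ENNReal.ofReal_lt_ofReal_iff hs).2 hts).trans_le hb⟩

section Xc

variable {X : ℝ → ℝ} {c t : ℝ} {k : ℕ}

lemma Xc_of_lt_Tu_zero (h : ENNReal.ofReal t < Tu X c 0) : Xc X c t = X 0 := by
  rw [Xc, if_pos h]

lemma Xc_of_mem_up (h₁ : Tu X c k ≤ ENNReal.ofReal t) (h₂ : ENNReal.ofReal t < Td X c k) :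
    Xc X c t = supOn X (Tu X c k).toReal t - c := by
  have hex : ∃ j, Tu X c j ≤ ENNReal.ofReal t ∧ ENNReal.ofReal t < Td X c j := ⟨k, h₁, h₂⟩
  have hk : Nat.find hex = k := (Nat.find_eq_iff hex).2 ⟨⟨h₁, h₂⟩, fun j hj ⟨_, hj₂⟩ =>
    hj₂.not_ge ((Td_le_Tu_succ X c j).trans ((Tu_mono X c hj).trans h₁))⟩
  rw [Xc, if_neg ((Tu_mono X c k.zero_le).trans h₁).not_gt, dif_pos hex, hk]

lemma neg_Xc_of_mem_down (h₁ : Td X c k ≤ ENNReal.ofReal t)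
    (h₂ : ENNReal.ofReal t < Tu X c (k + 1)) :
    (-Xc X c) t = supOn (-X) (Td X c k).toReal t - c := by
  have hup : ¬∃ j, Tu X c j ≤ ENNReal.ofReal t ∧ ENNReal.ofReal t < Td X c j := by
    rintro ⟨j, hj₁, hj₂⟩
    rcases le_or_gt j k with hjk | hkj
    · exact hj₂.not_ge ((Td_mono X c hjk).trans h₁)
    · exact h₂.not_ge ((Tu_mono X c hkj).trans hj₁)
  have hex : ∃ j, Td X c j ≤ ENNReal.ofReal t ∧ ENNReal.ofReal t < Tu X c (j + 1) :=
    ⟨k, h₁, h₂⟩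
  have hk : Nat.find hex = k := (Nat.find_eq_iff hex).2 ⟨⟨h₁, h₂⟩, fun j hj ⟨_, hj₂⟩ =>
    hj₂.not_ge (((Tu_mono X c hj).trans (Tu_le_Td X c k)).trans h₁)⟩
  rw [Pi.neg_apply, Xc, if_neg ((Tu_le_Td X c 0).trans ((Td_mono X c k.zero_le).trans h₁)).not_gt,
    dif_neg hup, dif_pos hex, hk, infOn_eq_neg_supOn_neg]
  ring

end Xc

namespace Cadlag

variable {X : ℝ → ℝ} {c s : ℝ}

lemma abs_jumpAt_le_at_nextTd (hX : Cadlag X) (hc : 0 < c) {a : ℝ≥0∞} {f : ℝ → ℝ}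
    (ha : a < ENNReal.ofReal s) (hsT : ENNReal.ofReal s = nextTd X c a)
    (hf : f =ᶠ[𝓝[<] s] fun t => supOn X a.toReal t - c) (hfs : f s = X s + c) :
    |jumpAt f s| ≤ |jumpAt X s| := by
  have hs : 0 < s := ENNReal.ofReal_pos.1 (ha.trans_le' zero_le)
  have has : a.toReal < s := ENNReal.toReal_lt_of_lt_ofReal ha
  set S := sSup (X '' Ico a.toReal s)
  have hdrop : 2 * c ≤ S - X s := by
    have := hX.two_mul_le_sSup_sub_nextTd hc ha.ne_top (hsT ▸ ENNReal.ofReal_ne_top)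
    rwa [← hsT, ENNReal.toReal_ofReal hs.le] at this
  have hlim : leftLim f s = S - c :=
    leftLim_eq_of_eventuallyEq hf ((hX.tendsto_supOn_nhdsLT has).sub_const c)
  have hXlim : S - leftLim X s ≤ 2 * c := by
    refine le_of_tendsto ((hX.tendsto_supOn_nhdsLT has).sub (hX.tendsto_leftLim s)) ?_
    filter_upwards [eventually_nhdsLT_ofReal_mem_Ioo ha hsT.le] with t ht
    exact supOn_sub_le_of_lt_nextTd ht.1 ht.2
  rw [jumpAt, jumpAt, hfs, hlim, abs_of_nonpos (by linarith), abs_of_nonpos (by linarith)]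
  linarith

lemma abs_jumpAt_le_of_le_nextTd (hX : Cadlag X) (hc : 0 < c) {a : ℝ≥0∞} {f : ℝ → ℝ}
    (ha : a < ENNReal.ofReal s) (hsT : ENNReal.ofReal s ≤ nextTd X c a)
    (hf : f =ᶠ[𝓝[<] s] fun t => supOn X a.toReal t - c)
    (hf_lt : ENNReal.ofReal s < nextTd X c a → f s = supOn X a.toReal s - c)
    (hf_eq : ENNReal.ofReal s = nextTd X c a → f s = X s + c) :
    |jumpAt f s| ≤ |jumpAt X s| := by
  rcases hsT.lt_or_eq with hlt | heq
  · exact hX.abs_jumpAt_le_of_eventuallyEq_supOn (ENNReal.toReal_lt_of_lt_ofReal ha) hf (hf_lt hlt)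
  · exact hX.abs_jumpAt_le_at_nextTd hc ha heq hf (hf_eq heq)

lemma abs_jumpAt_Xc_le_of_le_Tu_zero (hX : Cadlag X) (hc : 0 < c) (hs : 0 < s)
    (h : ENNReal.ofReal s ≤ Tu X c 0) : |jumpAt (Xc X c) s| ≤ |jumpAt X s| := by
  have hleft := eventually_nhdsLT_ofReal_mem_Ioo (ENNReal.ofReal_pos.2 hs) h
  have hlim : leftLim (Xc X c) s = X 0 :=
    leftLim_eq_of_eventuallyEq (hleft.mono fun t ht => Xc_of_lt_Tu_zero ht.2) tendsto_const_nhds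
  rcases h.lt_or_eq with hlt | heq
  · rw [jumpAt, hlim, Xc_of_lt_Tu_zero hlt, sub_self, abs_zero]
    exact abs_nonneg _
  have hT : Tu X c 0 ≠ ⊤ := heq ▸ ENNReal.ofReal_ne_top
  have hts : (Tu X c 0).toReal = s := by rw [← heq, ENNReal.toReal_ofReal hs.le]
  have hXcs : Xc X c s = X s - c := by
    rw [Xc_of_mem_up heq.ge (heq ▸ hX.Tu_lt_Td hc hT), hts, supOn_self]
  have hjump : X 0 + c ≤ X s := hts ▸ hX.add_le_apply_TuZero hT (hts ▸ hs)
  have hXlim : leftLim X s ≤ X 0 + c := by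
    refine le_of_tendsto (hX.tendsto_leftLim s) ?_
    filter_upwards [hleft] with t ht
    exact hX.le_add_of_lt_TuZero (ENNReal.ofReal_pos.1 ht.1).le ht.2
  rw [jumpAt, jumpAt, hXcs, hlim, abs_of_nonneg (by linarith), abs_of_nonneg (by linarith)]
  linarith

lemma abs_jumpAt_Xc_le_of_up (hX : Cadlag X) (hc : 0 < c) {k : ℕ}
    (h₁ : Tu X c k < ENNReal.ofReal s) (h₂ : ENNReal.ofReal s ≤ Td X c k) :
    |jumpAt (Xc X c) s| ≤ |jumpAt X s| := by
  have hs : 0 < s := ENNReal.ofReal_pos.1 (h₁.trans_le' zero_le)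
  rw [Td_eq_nextTd] at h₂
  refine hX.abs_jumpAt_le_of_le_nextTd hc h₁ h₂ ?_
    (fun hlt => Xc_of_mem_up h₁.le (by rwa [Td_eq_nextTd])) (fun heq => ?_)
  · filter_upwards [eventually_nhdsLT_ofReal_mem_Ioo h₁ h₂] with t ht
    exact Xc_of_mem_up ht.1.le (by rw [Td_eq_nextTd]; exact ht.2)
  · rw [← Td_eq_nextTd] at heq
    have := neg_Xc_of_mem_down heq.ge (heq ▸ hX.Td_lt_Tu_succ hc (heq ▸ ENNReal.ofReal_ne_top))
    rw [← heq, ENNReal.toReal_ofReal hs.le, supOn_self, Pi.neg_apply, Pi.neg_apply] at this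
    linarith

lemma abs_jumpAt_Xc_le_of_down (hX : Cadlag X) (hc : 0 < c) {k : ℕ}
    (h₁ : Td X c k < ENNReal.ofReal s) (h₂ : ENNReal.ofReal s ≤ Tu X c (k + 1)) :
    |jumpAt (Xc X c) s| ≤ |jumpAt X s| := by
  have hs : 0 < s := ENNReal.ofReal_pos.1 (h₁.trans_le' zero_le)
  rw [← abs_neg, ← jumpAt_neg, ← abs_neg (jumpAt X s), ← jumpAt_neg]
  rw [Tu_succ_eq_nextTd_neg] at h₂
  refine hX.neg.abs_jumpAt_le_of_le_nextTd hc h₁ h₂ ?_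
    (fun hlt => neg_Xc_of_mem_down h₁.le (by rwa [Tu_succ_eq_nextTd_neg])) (fun heq => ?_)
  · filter_upwards [eventually_nhdsLT_ofReal_mem_Ioo h₁ h₂] with t ht
    exact neg_Xc_of_mem_down ht.1.le (by rw [Tu_succ_eq_nextTd_neg]; exact ht.2)
  · rw [← Tu_succ_eq_nextTd_neg] at heq
    have := Xc_of_mem_up heq.ge (heq ▸ hX.Tu_lt_Td hc (heq ▸ ENNReal.ofReal_ne_top))
    rw [← heq, ENNReal.toReal_ofReal hs.le, supOn_self] at this
    simp only [Pi.neg_apply, this]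
    ring

end Cadlag

theorem stmt_3_general (X : ℝ → ℝ) (hX : Cadlag X) (c : ℝ) (hc : 0 < c) :
    ∀ s : ℝ, 0 < s → |jumpAt (Xc X c) s| ≤ |jumpAt X s| := by
  intro s hs
  obtain ⟨k, hk⟩ := hX.exists_lt_Td hc s
  induction k with
  | zero =>
    rcases le_or_gt (ENNReal.ofReal s) (Tu X c 0) with h | h
    · exact hX.abs_jumpAt_Xc_le_of_le_Tu_zero hc hs h
    · exact hX.abs_jumpAt_Xc_le_of_up hc h hk.le
  | succ k ih =>
    rcases lt_or_ge (ENNReal.ofReal s) (Td X c k) with h | h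
    · exact ih h
    rcases h.lt_or_eq with h | h
    · rcases le_or_gt (ENNReal.ofReal s) (Tu X c (k + 1)) with h' | h'
      · exact hX.abs_jumpAt_Xc_le_of_down hc h h'
      · exact hX.abs_jumpAt_Xc_le_of_up hc h' hk.le
    · have hTu : Tu X c k ≠ ⊤ := ne_top_of_le_ne_top ENNReal.ofReal_ne_top (h ▸ Tu_le_Td X c k)
      exact hX.abs_jumpAt_Xc_le_of_up hc ((hX.Tu_lt_Td hc hTu).trans_eq h) h.ge

/-- the jumps of `X^c` are dominated by the jumps of `X`:
`|ΔX^c(s)| ≤ |ΔX(s)|` for every `s > 0`. -/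
theorem stmt_3 (X : ℝ → ℝ) (hX : Cadlag X) (c : ℝ) (hc : 0 < c)
    (hud : Tu X c 0 ≤ TdIni X c) :
    ∀ s : ℝ, 0 < s → |jumpAt (Xc X c) s| ≤ |jumpAt X s| :=
  stmt_3_general X hX c hc

end
end

section
/- Let B^c be the finite-variation approximation of a Brownian motion B with |B − B^c| ≤ c, and suppose dB^c ≥ 0 on {B^c = B − c} and dB^c ≤ 0 on {B^c = B + c}. Then B^{c/2} − B^c ≥ c/2 on the support of the positive part of dB^c and B^{c/2} − B^c ≤ −c/2 on the support of the negative part, and consequently ∫_0^1 (B^{c/2} − B^c) dB^c ≥ (c/2) TV(B^c, 1). -/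
open Set Filter MeasureTheory
open scoped ENNReal NNReal Topology

noncomputable section

/-!
Since `|B - B^{c/2}| ≤ c/2`, at a time where `B^c = B - c` we get
`B^{c/2} - B^c = (B^{c/2} - B) + c ≥ c/2`, and symmetrically `≤ -c/2` where `B^c = B + c`.
The positive part `μ` of `dB^c` lives on the first set and the negative part `ν` on the second,
so integrating gives `∫ (B^{c/2} - B^c) d(μ - ν) ≥ (c/2)(μ + ν)(0, 1]`, and `(μ + ν)(0, 1]` is the
total variation of `B^c` on `[0, 1]`.
-/

lemma tendsto_ceil_mul_two_pow_div_two_pow (t : ℝ) :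
    Tendsto (fun n : ℕ => (⌈t * 2 ^ n⌉ : ℝ) / 2 ^ n) atTop (𝓝[≥] t) := by
  have h_ge : ∀ n : ℕ, t ≤ (⌈t * 2 ^ n⌉ : ℝ) / 2 ^ n := fun n => by
    rw [le_div_iff₀ (by positivity)]
    exact Int.le_ceil _
  have h_le : ∀ n : ℕ, (⌈t * 2 ^ n⌉ : ℝ) / 2 ^ n ≤ t + (1 / 2) ^ n := fun n => by
    rw [div_le_iff₀ (by positivity), add_mul, one_div_pow, one_div_mul_cancel (by positivity)]
    exact (Int.ceil_lt_add_one _).le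
  have h_upper : Tendsto (fun n : ℕ => t + (1 / 2 : ℝ) ^ n) atTop (𝓝 t) := by
    simpa using tendsto_const_nhds.add
      (tendsto_pow_atTop_nhds_zero_of_lt_one (r := (1 / 2 : ℝ)) (by norm_num) (by norm_num))
  exact tendsto_nhdsWithin_iff.2
    ⟨tendsto_of_tendsto_of_tendsto_of_le_of_le tendsto_const_nhds h_upper h_ge h_le,
      Eventually.of_forall h_ge⟩

/-- A right-continuous function is the pointwise limit of the functions `f (⌈t 2ⁿ⌉ / 2ⁿ)`,
each of which factors through `ℤ`. -/
lemma measurable_of_continuousWithinAt_Ici {β : Type*} [TopologicalSpace β]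
    [TopologicalSpace.PseudoMetrizableSpace β] [MeasurableSpace β] [BorelSpace β] {f : ℝ → β}
    (hf : ∀ t, ContinuousWithinAt f (Ici t) t) : Measurable f := by
  refine measurable_of_tendsto_metrizable (f := fun n t => f ((⌈t * 2 ^ n⌉ : ℝ) / 2 ^ n))
    (fun n => ?_) (tendsto_pi_nhds.2 fun t => (hf t).tendsto.comp
      (tendsto_ceil_mul_two_pow_div_two_pow t))
  exact (measurable_from_top (f := fun k : ℤ => f (k / 2 ^ n))).comp
    (Int.measurable_ceil.comp (measurable_id.mul_const _))

lemma Cadlag.measurable {f : ℝ → ℝ} (hf : Cadlag f) : Measurable f :=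
  measurable_of_continuousWithinAt_Ici hf.1

section SetIntegral

variable {α : Type*} [MeasurableSpace α] {μ : Measure α} {s : Set α} {f : α → ℝ} {a : ℝ}

lemma ae_restrict_of_measure_setOf_mem_and_not_eq_zero {p : α → Prop} (hs : MeasurableSet s)
    (h : μ {x | x ∈ s ∧ ¬ p x} = 0) : ∀ᵐ x ∂μ.restrict s, p x := by
  rw [ae_restrict_iff' hs]
  exact measure_mono_null (fun _ => Classical.not_imp.1) h

lemma mul_measureReal_le_setIntegral (hμs : μ s ≠ ∞) (hf : IntegrableOn f s μ)
    (h : ∀ᵐ x ∂μ.restrict s, a ≤ f x) : a * μ.real s ≤ ∫ x in s, f x ∂μ := by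
  rw [mul_comm, ← smul_eq_mul, ← setIntegral_const]
  exact integral_mono_ae (integrableOn_const hμs) hf h

lemma setIntegral_le_mul_measureReal (hμs : μ s ≠ ∞) (hf : IntegrableOn f s μ)
    (h : ∀ᵐ x ∂μ.restrict s, f x ≤ a) : ∫ x in s, f x ∂μ ≤ a * μ.real s := by
  rw [mul_comm, ← smul_eq_mul, ← setIntegral_const]
  exact integral_mono_ae hf (integrableOn_const hμs) h

end SetIntegral

theorem stmt_18_general (B : ℝ → ℝ) (c : ℝ)
    (Bc Bc2 : ℝ → ℝ) (hBc : Cadlag Bc) (hBc2 : Cadlag Bc2)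
    (happrox : ∀ t, |B t - Bc t| ≤ c) (happrox2 : ∀ t, |B t - Bc2 t| ≤ c / 2)
    (μ ν : Measure ℝ) [IsFiniteMeasure μ] [IsFiniteMeasure ν]
    (hμcarr : μ {t | t ∈ Ioc (0 : ℝ) 1 ∧ Bc t ≠ B t - c} = 0)
    (hνcarr : ν {t | t ∈ Ioc (0 : ℝ) 1 ∧ Bc t ≠ B t + c} = 0)
    (hTV : μ (Ioc (0 : ℝ) 1) + ν (Ioc (0 : ℝ) 1) =
      eVariationOn Bc (Icc 0 1)) :
    (∀ t, Bc t = B t - c → Bc2 t - Bc t ≥ c / 2) ∧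
    (∀ t, Bc t = B t + c → Bc2 t - Bc t ≤ -(c / 2)) ∧
    (∫ t in Ioc (0 : ℝ) 1, (Bc2 t - Bc t) ∂μ) -
        (∫ t in Ioc (0 : ℝ) 1, (Bc2 t - Bc t) ∂ν) ≥
      (c / 2) * (eVariationOn Bc (Icc 0 1)).toReal := by
  have h_lower : ∀ t, Bc t = B t - c → Bc2 t - Bc t ≥ c / 2 := fun t ht => by
    linarith [abs_le.1 (happrox2 t)]
  have h_upper : ∀ t, Bc t = B t + c → Bc2 t - Bc t ≤ -(c / 2) := fun t ht => by
    linarith [abs_le.1 (happrox2 t)]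
  refine ⟨h_lower, h_upper, ?_⟩
  have h_bound : ∀ t, ‖Bc2 t - Bc t‖ ≤ c / 2 + c := fun t => by
    rw [Real.norm_eq_abs]
    exact (abs_sub_le _ (B t) _).trans
      (add_le_add ((abs_sub_comm _ _).trans_le (happrox2 t)) (happrox t))
  have h_int : ∀ (ρ : Measure ℝ) [IsFiniteMeasure ρ], Integrable (fun t => Bc2 t - Bc t) ρ :=
    fun ρ _ => .of_bound (hBc2.measurable.sub hBc.measurable).aestronglyMeasurable _
      (Eventually.of_forall h_bound)
  have hμ := mul_measureReal_le_setIntegral (measure_ne_top μ _) (h_int μ).integrableOn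
    ((ae_restrict_of_measure_setOf_mem_and_not_eq_zero measurableSet_Ioc hμcarr).mono h_lower)
  have hν := setIntegral_le_mul_measureReal (measure_ne_top ν _) (h_int ν).integrableOn
    ((ae_restrict_of_measure_setOf_mem_and_not_eq_zero measurableSet_Ioc hνcarr).mono h_upper)
  rw [← hTV, ENNReal.toReal_add (measure_ne_top μ _) (measure_ne_top ν _)]
  simp only [measureReal_def] at hμ hν
  linarith

/-- on the support of the positive (resp. negative) part of `dB^c`
one has `B^{c/2} − B^c ≥ c/2` (resp. `≤ −c/2`), and consequently
`∫_0^1 (B^{c/2} − B^c) dB^c ≥ (c/2) · TV(B^c, 1)`. -/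
theorem stmt_18 (B : ℝ → ℝ) (hB : Continuous B) (c : ℝ) (hc : 0 < c)
    (Bc Bc2 : ℝ → ℝ) (hBc : Cadlag Bc) (hBc2 : Cadlag Bc2)
    (happrox : ∀ t, |B t - Bc t| ≤ c) (happrox2 : ∀ t, |B t - Bc2 t| ≤ c / 2)
    (μ ν : Measure ℝ) [IsFiniteMeasure μ] [IsFiniteMeasure ν]
    (hsing : μ.MutuallySingular ν)
    (hrepr : ∀ t ∈ Icc (0 : ℝ) 1,
      Bc t = Bc 0 + (μ (Ioc 0 t)).toReal - (ν (Ioc 0 t)).toReal)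
    (hμcarr : μ {t | t ∈ Ioc (0 : ℝ) 1 ∧ Bc t ≠ B t - c} = 0)
    (hνcarr : ν {t | t ∈ Ioc (0 : ℝ) 1 ∧ Bc t ≠ B t + c} = 0)
    (hTV : μ (Ioc (0 : ℝ) 1) + ν (Ioc (0 : ℝ) 1) =
      eVariationOn Bc (Icc 0 1)) :
    (∀ t, Bc t = B t - c → Bc2 t - Bc t ≥ c / 2) ∧
    (∀ t, Bc t = B t + c → Bc2 t - Bc t ≤ -(c / 2)) ∧
    (∫ t in Ioc (0 : ℝ) 1, (Bc2 t - Bc t) ∂μ) -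
        (∫ t in Ioc (0 : ℝ) 1, (Bc2 t - Bc t) ∂ν) ≥
      (c / 2) * (eVariationOn Bc (Icc 0 1)).toReal :=
  stmt_18_general B c Bc Bc2 hBc hBc2 happrox happrox2 μ ν hμcarr hνcarr hTV

end
end
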